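/- arXiv:math/0503300 — 2 statements merged into one kernel-verified Lean document; each statement's English description precedes it below -/
import Mathlib

section
/- For every integer n ≥ 0, P_e(2n+1) − P_o(2n+1) = (−1)^{n+1} c_n, as an identity of integers, where c_n is the n-th Catalan number. -/
/-- A plane tree: a root together with a finite ordered list of plane subtrees. -/
inductive PlaneTree : Type
  | node : List PlaneTree → PlaneTree

namespace PlaneTree

/-- The number of vertices of a plane tree. -/
def numVertices : PlaneTree → ℕ
  | node ts => 1 + (ts.attach.map fun x => numVertices x.1).sum
decreasing_by
  have := List.sizeOf_lt_of_mem x.2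
  simp only [PlaneTree.node.sizeOf_spec]
  omega

/-- The number of edges of a plane tree: one less than the number of vertices. -/
def numEdges (t : PlaneTree) : ℕ := t.numVertices - 1

/-- The number of leaves (vertices with no children) of a plane tree. -/
def numLeaves : PlaneTree → ℕ
  | node [] => 1
  | node (t :: ts) => ((t :: ts).attach.map fun x => numLeaves x.1).sum
decreasing_by
  have := List.sizeOf_lt_of_mem x.2
  simp only [PlaneTree.node.sizeOf_spec]
  omega

end PlaneTree

namespace PlaneTree

lemma sum_attach_map {α : Type*} (l : List α) (f : α → ℕ) :
    (l.attach.map fun x => f x.1).sum = (l.map f).sum := by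
  conv_rhs => rw [← List.attach_map_val (l := l)]

lemma numVertices_node (ts : List PlaneTree) :
    numVertices (node ts) = 1 + (ts.map numVertices).sum := by
  rw [numVertices, sum_attach_map]

lemma numLeaves_node_cons (t : PlaneTree) (ts : List PlaneTree) :
    numLeaves (node (t :: ts)) = numLeaves t + (ts.map numLeaves).sum := by
  rw [numLeaves, sum_attach_map, List.map_cons, List.sum_cons]

lemma one_le_numVertices (t : PlaneTree) : 1 ≤ t.numVertices := by
  cases t with
  | node ts => rw [numVertices_node]; omega

lemma numEdges_node (ts : List PlaneTree) :
    numEdges (node ts) = (ts.map (fun t => numEdges t + 1)).sum := by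
  rw [numEdges, numVertices_node]
  have : ∀ l : List PlaneTree, (l.map numVertices).sum = (l.map (fun t => numEdges t + 1)).sum := by
    intro l
    induction l with
    | nil => rfl
    | cons a l ih =>
      simp only [List.map_cons, List.sum_cons, ih, numEdges]
      have := one_le_numVertices a
      omega
  rw [this]; omega

lemma numEdges_node_cons (t : PlaneTree) (ts : List PlaneTree) :
    numEdges (node (t :: ts)) = numEdges t + 1 + numEdges (node ts) := by
  rw [numEdges_node, numEdges_node, List.map_cons, List.sum_cons]

lemma numEdges_node_nil : numEdges (node []) = 0 := by simp [numEdges_node]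

lemma numLeaves_node_cons' (t : PlaneTree) (ts : List PlaneTree) (h : ts ≠ []) :
    numLeaves (node (t :: ts)) = numLeaves t + numLeaves (node ts) := by
  rw [numLeaves_node_cons]
  cases ts with
  | nil => simp at h
  | cons a l => rw [numLeaves_node_cons]; simp

end PlaneTree

namespace PlaneTree

noncomputable instance : DecidableEq PlaneTree := Classical.decEq _

lemma numEdges_pos_ne_nil {ts : List PlaneTree} (h : numEdges (node ts) ≠ 0) : ts ≠ [] := by
  intro hts; subst hts; exact h numEdges_node_nil

lemma eq_nil_of_numEdges_zero {ts : List PlaneTree} (h : numEdges (node ts) = 0) : ts = [] := by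
  cases ts with
  | nil => rfl
  | cons a l => rw [numEdges_node_cons] at h; omega

/-- pairing: (t, s) ↦ tree whose root has first child t and remaining structure from s. -/
def pair : PlaneTree × PlaneTree → PlaneTree
  | (t, node ts) => node (t :: ts)

lemma pair_injective : Function.Injective pair := by
  rintro ⟨a, ⟨bs⟩⟩ ⟨c, ⟨ds⟩⟩ h
  simp only [pair] at h
  injection h with h'
  injection h' with h1 h2
  simp [h1, h2]

lemma numEdges_pair (a b : PlaneTree) : numEdges (pair (a, b)) = numEdges a + 1 + numEdges b := by
  cases b with
  | node ts => exact numEdges_node_cons a ts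

/-- the finset of all plane trees with m edges -/
noncomputable def g : ℕ → Finset PlaneTree
  | 0 => {node []}
  | (m+1) => (Finset.range (m+1)).attach.biUnion
      fun i => ((g i.1) ×ˢ (g (m - i.1))).image pair
decreasing_by
  · have := Finset.mem_range.mp i.2; omega
  · have := Finset.mem_range.mp i.2; omega

lemma mem_g (m : ℕ) (t : PlaneTree) : t ∈ g m ↔ t.numEdges = m := by
  induction m using Nat.strong_induction_on generalizing t with
  | _ m ih =>
    cases m with
    | zero =>
      rw [g]
      simp only [Finset.mem_singleton]
      constructor
      · rintro rfl; exact numEdges_node_nil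
      · intro h
        cases t with
        | node ts => rw [eq_nil_of_numEdges_zero h]
    | succ m =>
      rw [g]
      simp only [Finset.mem_biUnion, Finset.mem_attach, true_and, Finset.mem_image,
        Finset.mem_product, Subtype.exists, Finset.mem_range]
      constructor
      · rintro ⟨i, hi, ⟨a, b⟩, ⟨ha, hb⟩, rfl⟩
        rw [ih i (by omega) a] at ha
        rw [ih (m - i) (by omega) b] at hb
        
        rw [numEdges_pair]; omega
      · intro h
        cases t with
        | node ts =>
          cases ts with
          | nil => rw [numEdges_node_nil] at h; omega
          | cons a l =>
            rw [numEdges_node_cons] at h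
            refine ⟨a.numEdges, by omega, (a, node l), ⟨?_, ?_⟩, rfl⟩
            · exact (ih a.numEdges (by omega) a).mpr rfl
            · exact (ih (m - a.numEdges) (by omega) (node l)).mpr (by omega)

end PlaneTree

namespace PlaneTree

/-- signed weight sum over trees with m edges -/
noncomputable def S (m : ℕ) : ℤ := ∑ t ∈ g m, (-1) ^ t.numLeaves

lemma numLeaves_node_nil : numLeaves (node []) = 1 := by rw [numLeaves]

lemma S_zero : S 0 = -1 := by
  rw [S, g]
  simp [numLeaves_node_nil]

lemma w_pair (a b : PlaneTree) :
    ((-1 : ℤ)) ^ (numLeaves (pair (a, b))) =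
      (-1) ^ (numLeaves a) * (-1) ^ (numLeaves b) * (if b.numEdges = 0 then -1 else 1) := by
  cases b with
  | node ts =>
    cases ts with
    | nil =>
      rw [pair, numLeaves_node_cons, numLeaves_node_nil, if_pos numEdges_node_nil]
      simp
    | cons c l =>
      have hne : numEdges (node (c :: l)) ≠ 0 := by rw [numEdges_node_cons]; omega
      rw [pair, if_neg hne, numLeaves_node_cons' a (c :: l) (by simp), pow_add]
      ring

lemma S_succ (m : ℕ) :
    S (m + 1) = 2 * S m + ∑ i ∈ Finset.range (m + 1), S i * S (m - i) := by
  rw [S, g]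
  rw [Finset.sum_biUnion]
  · have hterm : ∀ i ∈ (Finset.range (m+1)).attach,
        (∑ t ∈ ((g i.1) ×ˢ (g (m - i.1))).image pair, ((-1:ℤ)) ^ t.numLeaves)
          = S i.1 * S (m - i.1) * (if m - i.1 = 0 then -1 else 1) := by
      intro i _
      rw [Finset.sum_image (fun x _ y _ h => pair_injective h)]
      rw [Finset.sum_product]
      have : ∀ a ∈ g i.1, ∀ b ∈ g (m - i.1),
          ((-1:ℤ)) ^ (numLeaves (pair (a, b))) =
            (-1) ^ (numLeaves a) * ((-1) ^ (numLeaves b) * (if m - i.1 = 0 then -1 else 1)) := by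
        intro a _ b hb
        rw [w_pair a b, (mem_g _ b).mp hb]
        ring
      calc ∑ a ∈ g i.1, ∑ b ∈ g (m - i.1), ((-1:ℤ)) ^ (numLeaves (pair (a, b)))
          = ∑ a ∈ g i.1, ∑ b ∈ g (m - i.1),
              (-1:ℤ) ^ (numLeaves a) * ((-1) ^ (numLeaves b) * (if m - i.1 = 0 then -1 else 1)) := by
            refine Finset.sum_congr rfl fun a ha => Finset.sum_congr rfl fun b hb => this a ha b hb
        _ = S i.1 * S (m - i.1) * (if m - i.1 = 0 then -1 else 1) := by
            simp_rw [← Finset.mul_sum, ← Finset.sum_mul]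
            rw [S, S]; ring
    rw [Finset.sum_congr rfl hterm, Finset.sum_attach (Finset.range (m+1))
      (fun i => S i * S (m - i) * (if m - i = 0 then -1 else 1))]
    rw [Finset.sum_range_succ, Finset.sum_range_succ (fun i => S i * S (m - i))]
    have h1 : ∀ i ∈ Finset.range m,
        S i * S (m - i) * (if m - i = 0 then -1 else 1) = S i * S (m - i) := by
      intro i hi
      rw [if_neg (by have := Finset.mem_range.mp hi; omega)]
      ring
    rw [Finset.sum_congr rfl h1]
    simp [S_zero]
    ring
  · -- pairwise disjoint
    intro i _ j _ hij
    simp only [Finset.disjoint_left]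
    intro t ht ht'
    simp only [Finset.mem_image, Finset.mem_product] at ht ht'
    obtain ⟨⟨a, b⟩, ⟨ha, _⟩, rfl⟩ := ht
    obtain ⟨⟨c, d⟩, ⟨hc, _⟩, he⟩ := ht'
    have hacbd : (c, d) = (a, b) := pair_injective he
    have : a ∈ g j.1 := by rw [← (Prod.mk.injEq ..).mp hacbd |>.1]; exact hc
    have hia : a.numEdges = i.1 := (mem_g _ a).mp ha
    have hja : a.numEdges = j.1 := (mem_g _ a).mp this
    exact hij (Subtype.ext (hia ▸ hja))

end PlaneTree

namespace PlaneTree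

lemma sum_range_split (N : ℕ) (F : ℕ → ℤ) :
    ∑ i ∈ Finset.range (2 * N), F i =
      (∑ a ∈ Finset.range N, F (2 * a)) + ∑ a ∈ Finset.range N, F (2 * a + 1) := by
  induction N with
  | zero => simp
  | succ N ih =>
    have : 2 * (N + 1) = (2 * N + 1) + 1 := by ring
    rw [this, Finset.sum_range_succ, Finset.sum_range_succ, Finset.sum_range_succ,
      Finset.sum_range_succ, ih]
    ring

lemma catalan_succ_range (n : ℕ) :
    (catalan (n + 1) : ℤ) = ∑ i ∈ Finset.range (n + 1), (catalan i : ℤ) * catalan (n - i) := by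
  rw [catalan_succ]
  push_cast
  rw [Fin.sum_univ_eq_sum_range (fun i => (catalan i : ℤ) * catalan (n - i))]

lemma S_closed (n : ℕ) :
    S (2 * n + 1) = (-1) ^ (n + 1) * catalan n ∧ S (2 * n + 2) = 0 := by
  induction n using Nat.strong_induction_on with
  | _ n ih =>
    have hodd : S (2 * n + 1) = (-1) ^ (n + 1) * catalan n := by
      cases n with
      | zero =>
        rw [show 2 * 0 + 1 = 0 + 1 from rfl, S_succ]
        simp [S_zero]
      | succ k =>
        -- 2*(k+1)+1 = (2*k+2)+1
        rw [show 2 * (k + 1) + 1 = (2 * k + 2) + 1 by ring, S_succ]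
        have hEvenZero : ∀ a : ℕ, 1 ≤ a → a ≤ k + 1 → S (2 * a) = 0 := by
          intro a h1 h2
          have := (ih (a - 1) (by omega)).2
          rwa [show 2 * (a - 1) + 2 = 2 * a by omega] at this
        have h22 : S (2 * k + 2) = 0 := by
          have := hEvenZero (k + 1) (by omega) le_rfl
          rwa [show 2 * (k + 1) = 2 * k + 2 by ring] at this
        rw [h22]
        rw [show 2 * k + 2 + 1 = (2 * (k + 1)) + 1 by ring, Finset.sum_range_succ]
        rw [sum_range_split (k + 1)]
        have hE : ∑ a ∈ Finset.range (k + 1), S (2 * a) * S (2 * k + 2 - 2 * a) = 0 := by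
          refine Finset.sum_eq_zero fun a ha => ?_
          rcases Nat.eq_zero_or_pos a with rfl | hpos
          · rw [show 2 * k + 2 - 2 * 0 = 2 * (k + 1) by omega, hEvenZero (k+1) (by omega) le_rfl]
            ring
          · rw [hEvenZero a hpos (by have := Finset.mem_range.mp ha; omega)]
            ring
        have hO : ∑ a ∈ Finset.range (k + 1), S (2 * a + 1) * S (2 * k + 2 - (2 * a + 1)) =
            (-1) ^ (k + 1 + 1) * catalan (k + 1) := by
          have : ∀ a ∈ Finset.range (k + 1),
              S (2 * a + 1) * S (2 * k + 2 - (2 * a + 1)) =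
                (-1) ^ (k + 1 + 1) * ((catalan a : ℤ) * catalan (k - a)) := by
            intro a ha
            have hak : a ≤ k := by have := Finset.mem_range.mp ha; omega
            rw [show 2 * k + 2 - (2 * a + 1) = 2 * (k - a) + 1 by omega]
            rw [(ih a (by omega)).1, (ih (k - a) (by omega)).1]
            rw [show k + 1 + 1 = (a + 1) + (k - a + 1) by omega, pow_add]
            ring
          rw [Finset.sum_congr rfl this, ← Finset.mul_sum, ← catalan_succ_range k]
        rw [hE, hO]
        rw [show 2 * (k + 1) = 2 * k + 2 by ring, h22]
        ring
    refine ⟨hodd, ?_⟩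
    have hEvenZero : ∀ a : ℕ, 1 ≤ a → a ≤ n → S (2 * a) = 0 := by
      intro a h1 h2
      have := (ih (a - 1) (by omega)).2
      rwa [show 2 * (a - 1) + 2 = 2 * a by omega] at this
    rw [show 2 * n + 2 = (2 * n + 1) + 1 by ring, S_succ]
    rw [show 2 * n + 1 + 1 = 2 * (n + 1) by ring, sum_range_split (n + 1)]
    have hE : ∑ a ∈ Finset.range (n + 1), S (2 * a) * S (2 * n + 1 - 2 * a) = -S (2 * n + 1) := by
      rw [Finset.sum_eq_single_of_mem 0 (Finset.mem_range.mpr (by omega))]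
      · rw [show (2 : ℕ) * 0 = 0 by ring, show 2 * n + 1 - 0 = 2 * n + 1 by omega, S_zero]
        ring
      · intro a ha hane
        rw [hEvenZero a (by omega) (by have := Finset.mem_range.mp ha; omega)]
        ring
    have hO : ∑ a ∈ Finset.range (n + 1), S (2 * a + 1) * S (2 * n + 1 - (2 * a + 1)) =
        -S (2 * n + 1) := by
      rw [Finset.sum_eq_single_of_mem n (Finset.mem_range.mpr (by omega))]
      · rw [show 2 * n + 1 - (2 * n + 1) = 0 by omega, S_zero]
        ring
      · intro a ha hane
        have han : a < n := by have := Finset.mem_range.mp ha; omega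
        rw [show 2 * n + 1 - (2 * a + 1) = 2 * (n - a) by omega,
          hEvenZero (n - a) (by omega) (by omega)]
        ring
    rw [hE, hO]
    ring

end PlaneTree


/-- For every integer `n ≥ 0`, `P_e(2n+1) - P_o(2n+1) = (-1)^{n+1} c_n` as integers,
where `c_n` is the `n`-th Catalan number. -/
theorem even_sub_odd_leaves_card_odd_edges (n : ℕ) :
    ({t : PlaneTree | t.numEdges = 2 * n + 1 ∧ Even t.numLeaves}.ncard : ℤ) -
      ({t : PlaneTree | t.numEdges = 2 * n + 1 ∧ Odd t.numLeaves}.ncard : ℤ) =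
      (-1) ^ (n + 1) * catalan n := by
  classical
  set m := 2 * n + 1
  have he : {t : PlaneTree | t.numEdges = m ∧ Even t.numLeaves}
      = ↑((PlaneTree.g m).filter (fun t => Even t.numLeaves)) := by
    ext t
    simp [PlaneTree.mem_g, and_comm]
  have hfilter : (PlaneTree.g m).filter (fun t => ¬ Even t.numLeaves)
      = (PlaneTree.g m).filter (fun t => Odd t.numLeaves) :=
    Finset.filter_congr (fun t _ => by rw [Nat.not_even_iff_odd])
  have ho : {t : PlaneTree | t.numEdges = m ∧ Odd t.numLeaves}
      = ↑((PlaneTree.g m).filter (fun t => Odd t.numLeaves)) := by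
    ext t
    simp [PlaneTree.mem_g, and_comm]
  rw [he, ho, Set.ncard_coe_finset, Set.ncard_coe_finset]
  have hS : PlaneTree.S m =
      (((PlaneTree.g m).filter (fun t => Even t.numLeaves)).card : ℤ) -
        (((PlaneTree.g m).filter (fun t => Odd t.numLeaves)).card : ℤ) := by
    rw [PlaneTree.S, ← Finset.sum_filter_add_sum_filter_not (PlaneTree.g m)
      (fun t => Even t.numLeaves)]
    rw [Finset.sum_congr rfl (fun t ht => (Finset.mem_filter.mp ht).2.neg_one_pow),
      Finset.sum_congr rfl (fun t ht =>
        (Nat.not_even_iff_odd.mp (Finset.mem_filter.mp ht).2).neg_one_pow),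
      hfilter]
    simp
    ring
  rw [← hS]
  exact (PlaneTree.S_closed n).1
end

section
/- For every integer n ≥ 0, every plane tree in B_{2n+1} has exactly n+1 leaves. -/
/-- The predicate describing membership in `B_n`: a plane tree in which every leaf is
the first child of its parent and the first child of every internal vertex is a leaf.
Equivalently, the root is internal, its first child is a leaf, and all the remaining
subtrees again have this property. -/
inductive PlaneTree.InB : PlaneTree → Prop
  | mk (cs : List PlaneTree) (h : ∀ t ∈ cs, PlaneTree.InB t) :
      PlaneTree.InB (PlaneTree.node (PlaneTree.node [] :: cs))


lemma PlaneTree.numVertices_node_s5 (ts : List PlaneTree) :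
    (PlaneTree.node ts).numVertices = 1 + (ts.map PlaneTree.numVertices).sum := by
  rw [PlaneTree.numVertices, List.map_attach_eq_pmap]
  simp

lemma PlaneTree.numLeaves_cons (t : PlaneTree) (ts : List PlaneTree) :
    (PlaneTree.node (t :: ts)).numLeaves
      = t.numLeaves + (ts.map PlaneTree.numLeaves).sum := by
  rw [PlaneTree.numLeaves, List.map_attach_eq_pmap]
  simp

lemma PlaneTree.numVertices_eq_two_mul_numLeaves (t : PlaneTree) (ht : t.InB) :
    t.numVertices = 2 * t.numLeaves := by
  induction ht with
  | mk cs h ih =>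
    rw [PlaneTree.numVertices_node_s5, PlaneTree.numLeaves_cons]
    have : (cs.map PlaneTree.numVertices).sum = 2 * (cs.map PlaneTree.numLeaves).sum := by
      induction cs with
      | nil => simp
      | cons c cs' ihc =>
        simp only [List.map_cons, List.sum_cons]
        rw [ih c (by simp), ihc (fun t h' => h t (by simp [h'])) (fun t h' => ih t (by simp [h']))]
        ring
    simp only [List.map_cons, List.sum_cons, this]
    have hlv : (PlaneTree.node []).numLeaves = 1 := by rw [PlaneTree.numLeaves]
    have hv : (PlaneTree.node []).numVertices = 1 := by
      rw [PlaneTree.numVertices_node_s5]; simp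
    rw [hv, hlv]
    ring

/-- For every integer `n ≥ 0`, every plane tree in `B_{2n+1}` has exactly `n + 1`
leaves. -/
theorem numLeaves_of_mem_B (n : ℕ) (t : PlaneTree) (ht : t.InB)
    (h : t.numEdges = 2 * n + 1) : t.numLeaves = n + 1 := by
  have h2 := PlaneTree.numVertices_eq_two_mul_numLeaves t ht
  have h1 : 1 ≤ t.numVertices := by
    cases ht with
    | mk cs hcs => rw [PlaneTree.numVertices_node_s5]; omega
  unfold PlaneTree.numEdges at h
  omega
end
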